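/- Let K be a 0-core CRG with exactly t white vertices and at least n black vertices. Then n × K(t+1,0) ⊑ n × K, i.e., the n-fold blow-up of the all-gray CRG on t+1 white vertices embeds into the n-fold blow-up of K in the sense of colored graphs. -/

import Mathlib

open Finset

inductive EColor | white | black | gray
deriving DecidableEq

/-- The `p`-weight of an edge color: `p` for white, `1-p` for black, `0` for gray. -/
def wval (p : ℝ) : EColor → ℝ
  | .white => p
  | .black => 1 - p
  | .gray => 0

/-- The matrix `M_K(p)` of a CRG given by vertex colors `vb` (`true` = black)
and edge colors `ec`. -/
def Mmat {V : Type*} [DecidableEq V] (vb : V → Bool) (ec : V → V → EColor) (p : ℝ)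
    (x y : V) : ℝ :=
  if x = y then (if vb x then 1 - p else p) else wval p (ec x y)

/-- `μ` is a probability mass. -/
def IsProb {V : Type*} [Fintype V] (μ : V → ℝ) : Prop :=
  (∀ x, 0 ≤ μ x) ∧ ∑ x, μ x = 1

/-- The quadratic form `⟨μ, M_K(p) μ⟩`. -/
def QF {V : Type*} [Fintype V] [DecidableEq V] (vb : V → Bool) (ec : V → V → EColor)
    (p : ℝ) (μ : V → ℝ) : ℝ :=
  ∑ x, ∑ y, μ x * Mmat vb ec p x y * μ y

/-- `g` is the minimum of the quadratic form over probability masses, i.e. `g = g_K(p)`. -/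
def gIs {V : Type*} [Fintype V] [DecidableEq V] (vb : V → Bool) (ec : V → V → EColor)
    (p g : ℝ) : Prop :=
  IsLeast {t | ∃ μ : V → ℝ, IsProb μ ∧ t = QF vb ec p μ} g

/-- The weighted gray-degree `d_G(u) = ∑_{v : uv gray} μ(v)`. -/
def grayDeg {V : Type*} [Fintype V] [DecidableEq V] (ec : V → V → EColor) (μ : V → ℝ)
    (u : V) : ℝ :=
  ∑ v ∈ Finset.univ.filter (fun v => v ≠ u ∧ ec u v = EColor.gray), μ v

/-- Colored-graph containment `G ⊑ H` between edge-colorings: an injection sending black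
edges to black-or-gray, white edges to white-or-gray, and gray edges to gray. -/
def SubCG {A B : Type*} (e1 : A → A → EColor) (e2 : B → B → EColor) : Prop :=
  ∃ φ : A → B, Function.Injective φ ∧ ∀ a b, a ≠ b →
    (e1 a b = EColor.black → (e2 (φ a) (φ b) = EColor.black ∨ e2 (φ a) (φ b) = EColor.gray)) ∧
    (e1 a b = EColor.white → (e2 (φ a) (φ b) = EColor.white ∨ e2 (φ a) (φ b) = EColor.gray)) ∧
    (e1 a b = EColor.gray → e2 (φ a) (φ b) = EColor.gray)

/-- The `m`-fold blow-up of a CRG as a colored graph: each vertex becomes a class of `m`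
vertices, internal edges get the vertex color, cross edges get the edge color. -/
def blowup {V : Type*} [DecidableEq V] (vb : V → Bool) (ec : V → V → EColor) (m : ℕ) :
    V × Fin m → V × Fin m → EColor :=
  fun x y => if x.1 = y.1 then (if vb x.1 then EColor.black else EColor.white)
    else ec x.1 y.1

/-! The `k`-th class of `n × K(t+1,0)` (`k < t`) goes to the class of the `k`-th white vertex
of `K`, and the last class is spread over `n` distinct black vertices, one vertex in each.
Edges inside a class are white and land inside a white class or between two black vertices,
and in a 0-core CRG no edge is black. Edges between classes are gray and land on an edge at a
white vertex, which is gray because white edges only join black vertices. -/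

open Function

def EColor.Le (c d : EColor) : Prop := d = c ∨ d = .gray

theorem EColor.white_le_iff {c : EColor} : EColor.white.Le c ↔ c ≠ .black := by
  cases c <;> simp [EColor.Le]

theorem subCG_of_forall_le {A B : Type*} {e₁ : A → A → EColor} {e₂ : B → B → EColor}
    (φ : A → B) (hφ : Injective φ) (h : ∀ a b, a ≠ b → (e₁ a b).Le (e₂ (φ a) (φ b))) :
    SubCG e₁ e₂ :=
  ⟨φ, hφ, fun a b hab => by
    rcases h a b hab with h | h <;> rw [h] <;> cases e₁ a b <;> simp⟩

section Blowup

variable {V : Type*} [DecidableEq V] {vb : V → Bool} {ec : V → V → EColor} {m : ℕ}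

theorem blowup_same_class (u : V) (i j : Fin m) :
    blowup vb ec m (u, i) (u, j) = if vb u then .black else .white :=
  if_pos rfl

theorem blowup_of_ne {u u' : V} (h : u ≠ u') (i j : Fin m) :
    blowup vb ec m (u, i) (u', j) = ec u u' :=
  if_neg h

end Blowup

def IsZeroCore {V : Type*} (vb : V → Bool) (ec : V → V → EColor) : Prop :=
  (∀ x y, x ≠ y → ec x y ≠ .black) ∧
    ∀ x y, x ≠ y → ec x y = .white → vb x = true ∧ vb y = true

namespace IsZeroCore

variable {V : Type*} {vb : V → Bool} {ec : V → V → EColor} {x y : V}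

theorem ne_black (hK : IsZeroCore vb ec) (hxy : x ≠ y) : ec x y ≠ .black :=
  hK.1 x y hxy

theorem eq_gray (hK : IsZeroCore vb ec) (hxy : x ≠ y) (h : vb x = false ∨ vb y = false) :
    ec x y = .gray := by
  cases hc : ec x y with
  | black => exact absurd hc (hK.ne_black hxy)
  | white => obtain ⟨hx, hy⟩ := hK.2 x y hxy hc; simp_all
  | gray => rfl

end IsZeroCore

theorem exists_injective_fin_of_le_card_filter {α : Type*} [Fintype α] (p : α → Prop)
    [DecidablePred p] {m : ℕ} (hm : m ≤ #(univ.filter p)) :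
    ∃ f : Fin m → α, Injective f ∧ ∀ i, p (f i) := by
  let f : Fin m ↪ α := (Fin.castLEEmb hm).trans
    ((univ.filter p).equivFin.symm.toEmbedding.trans (Embedding.subtype _))
  exact ⟨f, f.injective, fun i => (mem_filter.mp (Subtype.prop _)).2⟩

theorem subCG_blowup_gray_of_injective {V : Type*} [DecidableEq V] {vb : V → Bool}
    {ec : V → V → EColor} (hK : IsZeroCore vb ec) {t n : ℕ} {w : Fin t → V} {b : Fin n → V}
    (hw : Injective w) (hb : Injective b) (hwhite : ∀ k, vb (w k) = false)
    (hblack : ∀ i, vb (b i) = true) :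
    SubCG (blowup (fun _ : Fin (t + 1) => false) (fun _ _ => EColor.gray) n)
      (blowup vb ec n) := by
  have hwb : ∀ k i, w k ≠ b i := fun k i h => by simpa [h, hblack] using hwhite k
  refine subCG_of_forall_le (fun p => (Fin.snoc (α := fun _ => V) w (b p.2) p.1, p.2)) ?_ ?_
  · rintro ⟨k, i⟩ ⟨l, j⟩ h
    simp only [Prod.mk.injEq] at h
    obtain ⟨hkl, rfl⟩ := h
    have hbw : b i ∉ Set.range w := by rintro ⟨k, hk⟩; exact hwb k i hk
    rw [Fin.snoc_injective_of_injective hw hbw hkl]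
  · rintro ⟨k, i⟩ ⟨l, j⟩ hne
    dsimp only
    induction k using Fin.lastCases with
    | last =>
      induction l using Fin.lastCases with
      | last =>
        have hij : b i ≠ b j := hb.ne (by rintro rfl; exact hne rfl)
        simp only [Fin.snoc_last, blowup_same_class, blowup_of_ne hij]
        exact EColor.white_le_iff.mpr (hK.ne_black hij)
      | cast l =>
        simp only [Fin.snoc_last, Fin.snoc_castSucc, blowup_of_ne (Fin.castSucc_ne_last l).symm,
          blowup_of_ne (hwb l i).symm]
        exact Or.inr (hK.eq_gray (hwb l i).symm (Or.inr (hwhite l)))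
    | cast k =>
      induction l using Fin.lastCases with
      | last =>
        simp only [Fin.snoc_last, Fin.snoc_castSucc, blowup_of_ne (Fin.castSucc_ne_last k),
          blowup_of_ne (hwb k j)]
        exact Or.inr (hK.eq_gray (hwb k j) (Or.inl (hwhite k)))
      | cast l =>
        simp only [Fin.snoc_castSucc]
        by_cases hkl : k = l
        · subst hkl
          simp only [blowup_same_class, hwhite]
          exact Or.inl rfl
        · have hwkl : w k ≠ w l := hw.ne hkl
          simp only [blowup_of_ne (Fin.castSucc_injective _ |>.ne hkl), blowup_of_ne hwkl]
          exact Or.inr (hK.eq_gray hwkl (Or.inl (hwhite k)))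

theorem stmt12_general {V : Type*} [Fintype V] [DecidableEq V]
    (vb : V → Bool) (ec : V → V → EColor)
    (hnb : ∀ x y, x ≠ y → ec x y ≠ EColor.black)
    (hwe : ∀ x y, x ≠ y → ec x y = EColor.white → vb x = true ∧ vb y = true)
    (t n : ℕ)
    (hw : (Finset.univ.filter fun x => vb x = false).card = t)
    (hb : n ≤ (Finset.univ.filter fun x => vb x = true).card) :
    SubCG (blowup (fun _ : Fin (t + 1) => false) (fun _ _ => EColor.gray) n)
      (blowup vb ec n) := by
  obtain ⟨w, hw_inj, hwhite⟩ := exists_injective_fin_of_le_card_filter _ hw.ge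
  obtain ⟨b, hb_inj, hblack⟩ := exists_injective_fin_of_le_card_filter _ hb
  exact subCG_blowup_gray_of_injective ⟨hnb, hwe⟩ hw_inj hb_inj hwhite hblack

/-- if `K` is a 0-core CRG with exactly `t` white vertices and at least `n`
black vertices, then `n × K(t+1,0) ⊑ n × K`. -/
theorem stmt12 {V : Type*} [Fintype V] [DecidableEq V]
    (vb : V → Bool) (ec : V → V → EColor) (hsymm : ∀ a b, ec a b = ec b a)
    (hnb : ∀ x y, x ≠ y → ec x y ≠ EColor.black)
    (hwe : ∀ x y, x ≠ y → ec x y = EColor.white → vb x = true ∧ vb y = true)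
    (t n : ℕ)
    (hw : (Finset.univ.filter fun x => vb x = false).card = t)
    (hb : n ≤ (Finset.univ.filter fun x => vb x = true).card) :
    SubCG (blowup (fun _ : Fin (t + 1) => false) (fun _ _ => EColor.gray) n)
      (blowup vb ec n) :=
  stmt12_general vb ec hnb hwe t n hw hb
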